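/- Let F: ℝⁿ ⇉ ℝⁿ have convex graph, δ, σ, h > 0, θ = δ/σ, and G(u₁,u₂,u,u₃,u₄) = −u₁ − θ²u₂ + (2+2θ²−δ²/h)u − θ²u₃ + (δ²/h)u₄ − δ²F(u). Let (u₁,u₂,u,u₃,u₄,v) ∈ gph G, w = (2/δ²+2/σ²−1/h)u + (1/h)u₄ − (1/δ²)u₁ − (1/σ²)u₂ − (1/σ²)u₃ − (1/δ²)v, and v* ∈ ℝⁿ with v ∈ G_A(u₁,u₂,u,u₃,u₄; v*). Then (u₁*, u₂*, u*, u₃*, u₄*) ∈ G*(v*; (u₁,u₂,u,u₃,u₄,v)) with u₁* = −v*, u₂* = u₃* = −θ²v*, u₄* = (δ²/h)v* if and only if (1/δ²)u* − (2/δ² + 2/σ² − 1/h)v* ∈ F*(−v*; (u, w)). -/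

import Mathlib

open RealInnerProductSpace

noncomputable def HamE {n : ℕ} {X : Type*} (F : X → Set (EuclideanSpace ℝ (Fin n)))
    (u : X) (vs : EuclideanSpace ℝ (Fin n)) : EReal :=
  sSup ((fun v => ((⟪v, vs⟫ : ℝ) : EReal)) '' F u)

def Gset {n : ℕ} (δ σ h : ℝ) (F : EuclideanSpace ℝ (Fin n) → Set (EuclideanSpace ℝ (Fin n)))
    (u₁ u₂ u u₃ u₄ : EuclideanSpace ℝ (Fin n)) : Set (EuclideanSpace ℝ (Fin n)) :=
  (fun w => -u₁ - (δ / σ) ^ 2 • u₂ + (2 + 2 * (δ / σ) ^ 2 - δ ^ 2 / h) • u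
      - (δ / σ) ^ 2 • u₃ + (δ ^ 2 / h) • u₄ - δ ^ 2 • w) '' F u

/-! The set `G z` is the image of `F z₃` under `w ↦ gsetOffset z - δ² • w`, so the Hamiltonian of
`G` at `z` is `⟪gsetOffset z, v*⟫ + δ² H_F(z₃, -v*)`. The prescribed `u₁*, u₂*, u₃*, u₄*` are
exactly what cancels the dependence of `gsetOffset z` on `z₁, z₂, z₄, z₅`, so the inequality
defining `G*` reduces to one in `z₃` alone, which after division by `δ²` is the one defining `F*`. -/

namespace EReal

noncomputable def affineOrderIso (a : ℝ) {d : ℝ} (hd : 0 < d) : EReal ≃o EReal :=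
  Equiv.toOrderIso
    { toFun := fun x => a + d * x
      invFun := fun y => (d⁻¹ : ℝ) * ((-a : ℝ) + y)
      left_inv := fun x => by
        dsimp only
        rw [← add_assoc, ← coe_add, neg_add_cancel, coe_zero, zero_add, ← mul_assoc, ← coe_mul,
          inv_mul_cancel₀ hd.ne', coe_one, one_mul]
      right_inv := fun y => by
        dsimp only
        rw [← mul_assoc, ← coe_mul, mul_inv_cancel₀ hd.ne', coe_one, one_mul, ← add_assoc,
          ← coe_add, add_neg_cancel, coe_zero, zero_add] }
    (fun _ _ hxy => by
      dsimp only [Equiv.coe_fn_mk]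
      exact add_le_add_right (mul_le_mul_of_nonneg_left hxy (EReal.coe_pos.2 hd).le) _)
    (fun _ _ hxy => by
      dsimp only [Equiv.coe_fn_symm_mk]
      exact mul_le_mul_of_nonneg_left (add_le_add_right hxy _) (EReal.coe_pos.2 (inv_pos.2 hd)).le)

theorem affineOrderIso_apply (a : ℝ) {d : ℝ} (hd : 0 < d) (x : EReal) :
    affineOrderIso a hd x = a + d * x :=
  rfl

theorem sSup_image_coe_add_coe_mul (a : ℝ) {d : ℝ} (hd : 0 < d) (S : Set EReal) :
    sSup ((fun x => (a : EReal) + d * x) '' S) = a + d * sSup S := by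
  simpa only [affineOrderIso_apply, sSup_image] using ((affineOrderIso a hd).map_sSup S).symm

theorem coe_add_coe_mul_le_coe_add_coe_mul_add_coe_iff {a b s t d : ℝ} (hd : 0 < d)
    (h : a + d * t = b + s) (X Y : EReal) :
    (a : EReal) + d * X ≤ b + d * Y + s ↔ X ≤ Y + t := by
  have hshift : (a : EReal) + d * (Y + t) = b + d * Y + s := by
    rw [left_distrib_of_nonneg_of_ne_top (EReal.coe_nonneg.2 hd.le) (coe_ne_top d), ← coe_mul,
      add_left_comm, ← coe_add, h, coe_add, add_comm, add_right_comm]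
  rw [← hshift]
  simpa only [affineOrderIso_apply] using (affineOrderIso a hd).le_iff_le (x := X) (y := Y + t)

end EReal

theorem sSup_inner_image_sub_smul {E : Type*} [NormedAddCommGroup E] [InnerProductSpace ℝ E]
    (c y : E) {d : ℝ} (hd : 0 < d) (S : Set E) :
    sSup ((fun v => ((⟪v, y⟫ : ℝ) : EReal)) '' ((fun w => c - d • w) '' S))
      = ⟪c, y⟫ + d * sSup ((fun w => ((⟪w, -y⟫ : ℝ) : EReal)) '' S) := by
  rw [Set.image_image, ← EReal.sSup_image_coe_add_coe_mul _ hd, Set.image_image]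
  refine congrArg sSup (Set.image_congr fun w _ => ?_)
  rw [← EReal.coe_mul, ← EReal.coe_add, inner_sub_left, real_inner_smul_left, inner_neg_right,
    mul_neg, sub_eq_add_neg]

noncomputable def gsetOffset {E : Type*} [AddCommGroup E] [Module ℝ E] (δ σ h : ℝ)
    (u₁ u₂ u u₃ u₄ : E) : E :=
  -u₁ - (δ / σ) ^ 2 • u₂ + (2 + 2 * (δ / σ) ^ 2 - δ ^ 2 / h) • u - (δ / σ) ^ 2 • u₃
    + (δ ^ 2 / h) • u₄

theorem hamE_Gset {n : ℕ} {δ : ℝ} (hδ : δ ≠ 0) (σ h : ℝ)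
    (F : EuclideanSpace ℝ (Fin n) → Set (EuclideanSpace ℝ (Fin n)))
    (z : EuclideanSpace ℝ (Fin n) × EuclideanSpace ℝ (Fin n) × EuclideanSpace ℝ (Fin n) ×
      EuclideanSpace ℝ (Fin n) × EuclideanSpace ℝ (Fin n)) (vs : EuclideanSpace ℝ (Fin n)) :
    HamE (fun z' : EuclideanSpace ℝ (Fin n) × EuclideanSpace ℝ (Fin n) ×
        EuclideanSpace ℝ (Fin n) × EuclideanSpace ℝ (Fin n) × EuclideanSpace ℝ (Fin n) =>
        Gset δ σ h F z'.1 z'.2.1 z'.2.2.1 z'.2.2.2.1 z'.2.2.2.2) z vs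
      = ⟪gsetOffset δ σ h z.1 z.2.1 z.2.2.1 z.2.2.2.1 z.2.2.2.2, vs⟫
        + ((δ ^ 2 : ℝ) : EReal) * HamE F z.2.2.1 (-vs) :=
  sSup_inner_image_sub_smul _ _ (sq_pos_of_ne_zero hδ) _

theorem stmt8_general {n : ℕ} (δ σ h : ℝ) (hδ : 0 < δ)
    (F : EuclideanSpace ℝ (Fin n) → Set (EuclideanSpace ℝ (Fin n)))
    (u₁ u₂ u u₃ u₄ vs ustar : EuclideanSpace ℝ (Fin n)) :
    (∀ z : EuclideanSpace ℝ (Fin n) × EuclideanSpace ℝ (Fin n) × EuclideanSpace ℝ (Fin n) ×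
        EuclideanSpace ℝ (Fin n) × EuclideanSpace ℝ (Fin n),
      HamE (fun z' : EuclideanSpace ℝ (Fin n) × EuclideanSpace ℝ (Fin n) ×
          EuclideanSpace ℝ (Fin n) × EuclideanSpace ℝ (Fin n) × EuclideanSpace ℝ (Fin n) =>
          Gset δ σ h F z'.1 z'.2.1 z'.2.2.1 z'.2.2.2.1 z'.2.2.2.2) z vs ≤
        HamE (fun z' : EuclideanSpace ℝ (Fin n) × EuclideanSpace ℝ (Fin n) ×
          EuclideanSpace ℝ (Fin n) × EuclideanSpace ℝ (Fin n) × EuclideanSpace ℝ (Fin n) =>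
          Gset δ σ h F z'.1 z'.2.1 z'.2.2.1 z'.2.2.2.1 z'.2.2.2.2) (u₁, u₂, u, u₃, u₄) vs
        + (((⟪-vs, z.1 - u₁⟫ + ⟪-(δ / σ) ^ 2 • vs, z.2.1 - u₂⟫ + ⟪ustar, z.2.2.1 - u⟫
            + ⟪-(δ / σ) ^ 2 • vs, z.2.2.2.1 - u₃⟫
            + ⟪(δ ^ 2 / h) • vs, z.2.2.2.2 - u₄⟫ : ℝ) : EReal))) ↔
    (∀ ut : EuclideanSpace ℝ (Fin n),
      HamE F ut (-vs) ≤ HamE F u (-vs)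
        + ((⟪(1 / δ ^ 2) • ustar - (2 / δ ^ 2 + 2 / σ ^ 2 - 1 / h) • vs, ut - u⟫ : ℝ) : EReal)) := by
  have offset_shift (z₁ z₂ z₃ z₄ z₅ : EuclideanSpace ℝ (Fin n)) :
      ⟪gsetOffset δ σ h z₁ z₂ z₃ z₄ z₅, vs⟫
          + δ ^ 2 * ⟪(1 / δ ^ 2) • ustar - (2 / δ ^ 2 + 2 / σ ^ 2 - 1 / h) • vs, z₃ - u⟫
        = ⟪gsetOffset δ σ h u₁ u₂ u u₃ u₄, vs⟫
          + (⟪-vs, z₁ - u₁⟫ + ⟪-(δ / σ) ^ 2 • vs, z₂ - u₂⟫ + ⟪ustar, z₃ - u⟫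
            + ⟪-(δ / σ) ^ 2 • vs, z₄ - u₃⟫ + ⟪(δ ^ 2 / h) • vs, z₅ - u₄⟫) := by
    simp only [gsetOffset, inner_sub_left, inner_neg_left, inner_sub_right,
      inner_add_right, inner_neg_right, real_inner_smul_left, real_inner_smul_right,
      real_inner_comm vs]
    field_simp
    ring
  simp only [hamE_Gset hδ.ne']
  exact ⟨fun H ut => (EReal.coe_add_coe_mul_le_coe_add_coe_mul_add_coe_iff (pow_pos hδ 2)
      (offset_shift u₁ u₂ ut u₃ u₄) _ _).1 (H (u₁, u₂, ut, u₃, u₄)),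
    fun H z => (EReal.coe_add_coe_mul_le_coe_add_coe_mul_add_coe_iff (pow_pos hδ 2)
      (offset_shift z.1 z.2.1 z.2.2.1 z.2.2.2.1 z.2.2.2.2) _ _).2 (H z.2.2.1)⟩

/-- Theorem 4.2: equivalence between the locally adjoint mappings `G*` and `F*`, with
`u₁* = −v*`, `u₂* = u₃* = −θ²v*`, `u₄* = (δ²/h)v*`, expressed via Hamiltonian inequalities. -/
theorem stmt8 {n : ℕ} (δ σ h : ℝ) (hδ : 0 < δ) (hσ : 0 < σ) (hh : 0 < h)
    (F : EuclideanSpace ℝ (Fin n) → Set (EuclideanSpace ℝ (Fin n)))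
    (hF : Convex ℝ {p : EuclideanSpace ℝ (Fin n) × EuclideanSpace ℝ (Fin n) | p.2 ∈ F p.1})
    (u₁ u₂ u u₃ u₄ v w vs ustar : EuclideanSpace ℝ (Fin n))
    (hv : v ∈ Gset δ σ h F u₁ u₂ u u₃ u₄)
    (hw : w = (2 / δ ^ 2 + 2 / σ ^ 2 - 1 / h) • u + (1 / h) • u₄ - (1 / δ ^ 2) • u₁
      - (1 / σ ^ 2) • u₂ - (1 / σ ^ 2) • u₃ - (1 / δ ^ 2) • v)
    (hargmax : ((⟪v, vs⟫ : ℝ) : EReal) = HamE (fun z : EuclideanSpace ℝ (Fin n) ×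
        EuclideanSpace ℝ (Fin n) × EuclideanSpace ℝ (Fin n) × EuclideanSpace ℝ (Fin n) ×
        EuclideanSpace ℝ (Fin n) =>
        Gset δ σ h F z.1 z.2.1 z.2.2.1 z.2.2.2.1 z.2.2.2.2) (u₁, u₂, u, u₃, u₄) vs) :
    (∀ z : EuclideanSpace ℝ (Fin n) × EuclideanSpace ℝ (Fin n) × EuclideanSpace ℝ (Fin n) ×
        EuclideanSpace ℝ (Fin n) × EuclideanSpace ℝ (Fin n),
      HamE (fun z' : EuclideanSpace ℝ (Fin n) × EuclideanSpace ℝ (Fin n) ×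
          EuclideanSpace ℝ (Fin n) × EuclideanSpace ℝ (Fin n) × EuclideanSpace ℝ (Fin n) =>
          Gset δ σ h F z'.1 z'.2.1 z'.2.2.1 z'.2.2.2.1 z'.2.2.2.2) z vs ≤
        HamE (fun z' : EuclideanSpace ℝ (Fin n) × EuclideanSpace ℝ (Fin n) ×
          EuclideanSpace ℝ (Fin n) × EuclideanSpace ℝ (Fin n) × EuclideanSpace ℝ (Fin n) =>
          Gset δ σ h F z'.1 z'.2.1 z'.2.2.1 z'.2.2.2.1 z'.2.2.2.2) (u₁, u₂, u, u₃, u₄) vs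
        + (((⟪-vs, z.1 - u₁⟫ + ⟪-(δ / σ) ^ 2 • vs, z.2.1 - u₂⟫ + ⟪ustar, z.2.2.1 - u⟫
            + ⟪-(δ / σ) ^ 2 • vs, z.2.2.2.1 - u₃⟫
            + ⟪(δ ^ 2 / h) • vs, z.2.2.2.2 - u₄⟫ : ℝ) : EReal))) ↔
    (∀ ut : EuclideanSpace ℝ (Fin n),
      HamE F ut (-vs) ≤ HamE F u (-vs)
        + ((⟪(1 / δ ^ 2) • ustar - (2 / δ ^ 2 + 2 / σ ^ 2 - 1 / h) • vs, ut - u⟫ : ℝ) : EReal)) :=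
  stmt8_general δ σ h hδ F u₁ u₂ u u₃ u₄ vs ustar
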